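/- arXiv:math/0407139 — 6 statements merged into one kernel-verified Lean document; each statement's English description precedes it below -/
import Mathlib

section
/- Let A be an n×n matrix with nonnegative real entries, and let {x_ij} be independent real random variables with E[x_ij]=0 and E[x_ij^2]=1. Define X(A) to be the n×n matrix with entries sqrt(a_ij)·x_ij. Then E[det(X(A)^T X(A))] = per A, the permanent of A. -/
open MeasureTheory ProbabilityTheory Matrix Finset

section Aux

variable {ι Ω : Type*} [MeasurableSpace Ω] {μ : Measure Ω} [IsProbabilityMeasure μ]

lemma aux_integral_prod {f : ι → Ω → ℝ}
    (hindep : iIndepFun f μ) (hmeas : ∀ i, Measurable (f i))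
    (hint : ∀ i, Integrable (f i) μ) (s : Finset ι) :
    Integrable (fun ω => ∏ i ∈ s, f i ω) μ ∧
      (∫ ω, ∏ i ∈ s, f i ω ∂μ) = ∏ i ∈ s, ∫ ω, f i ω ∂μ := by
  classical
  induction s using Finset.induction_on with
  | empty => simp
  | @insert i s hi ih =>
      have hIndep : IndepFun (f i) (fun ω => ∏ j ∈ s, f j ω) μ := by
        have := (hindep.indepFun_finsetProd_of_notMem hmeas hi).symm
        have hfn : (∏ j ∈ s, f j) = fun ω => ∏ j ∈ s, f j ω := by
          funext ω; simp
        rwa [hfn] at this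
      constructor
      · have := hIndep.integrable_mul (hint i) ih.1
        have heq : (fun ω => ∏ j ∈ insert i s, f j ω)
            = fun ω => f i ω * ∏ j ∈ s, f j ω := by
          funext ω; rw [Finset.prod_insert hi]
        rw [heq]; exact this
      · have heq : ∀ ω, ∏ j ∈ insert i s, f j ω = f i ω * ∏ j ∈ s, f j ω := by
          intro ω; rw [Finset.prod_insert hi]
        simp only [heq]
        have h := hIndep.integral_mul_eq_mul_integral (hint i).aestronglyMeasurable ih.1.aestronglyMeasurable
        rw [show (f i * fun ω => ∏ j ∈ s, f j ω) = fun ω => f i ω * ∏ j ∈ s, f j ω from rfl] at h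
        rw [h, ih.2, Finset.prod_insert hi]

end Aux

/-- For an `n × n` nonnegative matrix `A` and independent random variables `x i j`
with mean `0` and variance `1`, the determinant of `X(A)ᵀ X(A)` with
`X(A) i j = √(a i j) * x i j` has expectation equal to the permanent of `A`. -/
theorem expectation_det_eq_permanent
    {Ω : Type*} [MeasurableSpace Ω] (μ : Measure Ω) [IsProbabilityMeasure μ]
    (n : ℕ) (A : Matrix (Fin n) (Fin n) ℝ) (hA : ∀ i j, 0 ≤ A i j)
    (x : Fin n × Fin n → Ω → ℝ)
    (hmeas : ∀ p, Measurable (x p))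
    (hindep : iIndepFun x μ)
    (hmean : ∀ p, ∫ ω, x p ω ∂μ = 0)
    (hvar : ∀ p, ∫ ω, (x p ω) ^ 2 ∂μ = 1) :
    ∫ ω, ((Matrix.of fun i j => Real.sqrt (A i j) * x (i, j) ω)ᵀ *
          (Matrix.of fun i j => Real.sqrt (A i j) * x (i, j) ω)).det ∂μ
      = ∑ σ : Equiv.Perm (Fin n), ∏ i, A i (σ i) := by
  classical
  -- basic integrability facts
  have hint2 : ∀ p, Integrable (fun ω => x p ω ^ 2) μ := by
    intro p
    by_contra h
    have := integral_undef h
    rw [hvar p] at this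
    exact one_ne_zero this
  have hint1 : ∀ p, Integrable (x p) μ := by
    intro p
    have h2 : MemLp (x p) 2 μ :=
      (memLp_two_iff_integrable_sq (hmeas p).aestronglyMeasurable).2 (hint2 p)
    exact h2.integrable one_le_two
  -- exponent function
  set e : Equiv.Perm (Fin n) → Equiv.Perm (Fin n) → Fin n × Fin n → ℕ :=
    fun σ τ p => (if σ p.2 = p.1 then 1 else 0) + (if τ p.2 = p.1 then 1 else 0) with he
  have hintk : ∀ p (k : ℕ), k ≤ 2 → Integrable (fun ω => x p ω ^ k) μ := by
    intro p k hk
    interval_cases k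
    · simpa using (integrable_const (1:ℝ))
    · simpa using hint1 p
    · exact hint2 p
  have hEk : ∀ p (k : ℕ), k ≤ 2 → (∫ ω, x p ω ^ k ∂μ) = if k = 1 then 0 else 1 := by
    intro p k hk
    interval_cases k
    · simp
    · simpa using hmean p
    · simpa using hvar p
  have hele : ∀ σ τ p, e σ τ p ≤ 2 := by
    intro σ τ p; simp only [he]; split <;> split <;> simp
  set C : Equiv.Perm (Fin n) → Equiv.Perm (Fin n) → ℝ :=
    fun σ τ => (((Equiv.Perm.sign σ : ℤ) : ℝ) * ((Equiv.Perm.sign τ : ℤ) : ℝ)) *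
      ((∏ i, Real.sqrt (A (σ i) i)) * ∏ i, Real.sqrt (A (τ i) i)) with hC
  -- the key product identity
  have hpow : ∀ (σ τ : Equiv.Perm (Fin n)) (ω : Ω),
      ∏ p : Fin n × Fin n, x p ω ^ e σ τ p
        = (∏ i, x (σ i, i) ω) * ∏ i, x (τ i, i) ω := by
    intro σ τ ω
    calc ∏ p : Fin n × Fin n, x p ω ^ e σ τ p
        = ∏ i, ∏ j, x (i, j) ω ^ e σ τ (i, j) := Fintype.prod_prod_type _
      _ = ∏ j, ∏ i, x (i, j) ω ^ e σ τ (i, j) := Finset.prod_comm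
      _ = ∏ j, (x (σ j, j) ω * x (τ j, j) ω) := by
          refine Finset.prod_congr rfl fun j _ => ?_
          simp only [he, pow_add, Finset.prod_mul_distrib, pow_ite, pow_one, pow_zero]
          rw [Finset.prod_ite_eq, Finset.prod_ite_eq]
          simp
      _ = (∏ i, x (σ i, i) ω) * ∏ i, x (τ i, i) ω := Finset.prod_mul_distrib
  -- pointwise expansion of determinant
  have hdet : ∀ ω, ((Matrix.of fun i j => Real.sqrt (A i j) * x (i, j) ω)ᵀ *
          (Matrix.of fun i j => Real.sqrt (A i j) * x (i, j) ω)).det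
      = ∑ σ : Equiv.Perm (Fin n), ∑ τ : Equiv.Perm (Fin n),
          C σ τ * ∏ p : Fin n × Fin n, x p ω ^ e σ τ p := by
    intro ω
    rw [det_mul, det_transpose, det_apply', Finset.sum_mul_sum]
    refine Finset.sum_congr rfl fun σ _ => Finset.sum_congr rfl fun τ _ => ?_
    rw [hpow σ τ ω]
    simp only [Matrix.of_apply, Finset.prod_mul_distrib, hC]
    ring
  -- integrability and factorization of the expectation of each product
  have hfact : ∀ (σ τ : Equiv.Perm (Fin n)),
      Integrable (fun ω => ∏ p : Fin n × Fin n, x p ω ^ e σ τ p) μ ∧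
        (∫ ω, ∏ p : Fin n × Fin n, x p ω ^ e σ τ p ∂μ)
          = ∏ p : Fin n × Fin n, ∫ ω, x p ω ^ e σ τ p ∂μ := by
    intro σ τ
    have hcomp : iIndepFun
        (fun p => fun ω => x p ω ^ e σ τ p) μ :=
      hindep.comp (fun p (y : ℝ) => y ^ e σ τ p) fun p => measurable_id.pow_const _
    exact aux_integral_prod hcomp (fun p => (hmeas p).pow_const _)
      (fun p => hintk p _ (hele σ τ p)) Finset.univ
  -- value of each term
  have hval : ∀ (σ τ : Equiv.Perm (Fin n)),
      C σ τ * ∏ p : Fin n × Fin n, (∫ ω, x p ω ^ e σ τ p ∂μ)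
        = if σ = τ then ∏ i, A (σ i) i else 0 := by
    intro σ τ
    by_cases h : σ = τ
    · subst h
      rw [if_pos rfl]
      have h1 : ∀ p : Fin n × Fin n, (∫ ω, x p ω ^ e σ σ p ∂μ) = 1 := by
        intro p
        rw [hEk p _ (hele σ σ p)]
        simp only [he]
        split <;> simp
      rw [Finset.prod_congr rfl fun p _ => h1 p, Finset.prod_const_one, mul_one, hC]
      dsimp only
      have hs : ((Equiv.Perm.sign σ : ℤ) : ℝ) * ((Equiv.Perm.sign σ : ℤ) : ℝ) = 1 := by
        rw [← Int.cast_mul, ← Units.val_mul]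
        simp
      rw [hs, one_mul, ← Finset.prod_mul_distrib]
      exact Finset.prod_congr rfl fun i _ => Real.mul_self_sqrt (hA _ _)
    · rw [if_neg h]
      obtain ⟨j, hj⟩ : ∃ j, σ j ≠ τ j := by
        by_contra hc
        push_neg at hc
        exact h (Equiv.ext hc)
      have h0 : (∫ ω, x (σ j, j) ω ^ e σ τ (σ j, j) ∂μ) = 0 := by
        rw [hEk _ _ (hele σ τ (σ j, j))]
        simp [he, hj.symm]
      rw [Finset.prod_eq_zero (Finset.mem_univ (σ j, j)) h0, mul_zero]
  -- put everything together
  calc ∫ ω, ((Matrix.of fun i j => Real.sqrt (A i j) * x (i, j) ω)ᵀ *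
          (Matrix.of fun i j => Real.sqrt (A i j) * x (i, j) ω)).det ∂μ
      = ∫ ω, ∑ σ : Equiv.Perm (Fin n), ∑ τ : Equiv.Perm (Fin n),
          C σ τ * ∏ p : Fin n × Fin n, x p ω ^ e σ τ p ∂μ := by
        exact integral_congr_ae (Filter.Eventually.of_forall hdet)
    _ = ∑ σ : Equiv.Perm (Fin n), ∑ τ : Equiv.Perm (Fin n),
          C σ τ * ∏ p : Fin n × Fin n, (∫ ω, x p ω ^ e σ τ p ∂μ) := by
        rw [integral_finset_sum _ fun σ _ => integrable_finset_sum _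
          fun τ _ => ((hfact σ τ).1.const_mul _)]
        refine Finset.sum_congr rfl fun σ _ => ?_
        rw [integral_finset_sum _ fun τ _ => ((hfact σ τ).1.const_mul _)]
        refine Finset.sum_congr rfl fun τ _ => ?_
        rw [integral_const_mul, (hfact σ τ).2]
    _ = ∑ σ : Equiv.Perm (Fin n), ∏ i, A (σ i) i := by
        refine Finset.sum_congr rfl fun σ _ => ?_
        rw [Finset.sum_congr rfl fun τ _ => hval σ τ]
        simp
    _ = ∑ σ : Equiv.Perm (Fin n), ∏ i, A i (σ i) := by
        refine Fintype.sum_equiv (Equiv.inv (Equiv.Perm (Fin n))) _ _ fun σ => ?_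
        show ∏ i, A (σ i) i = ∏ i, A i (σ⁻¹ i)
        rw [← Equiv.prod_comp σ (fun i => A i (σ⁻¹ i))]
        simp
end

section
/- Let A be an n×m matrix with nonnegative real entries, n ≥ m, and define the permanent of the rectangular matrix A as per A = Σ_{α ∈ Q_{m,n}} per A[α,⟨m⟩], where Q_{m,n} is the set of strictly increasing sequences of length m in {1,...,n} and A[α,⟨m⟩] is the m×m submatrix of A with rows indexed by α. If {x_ij} are independent with mean 0 and variance 1, and X(A)_{ij} = sqrt(a_ij) x_ij, then E[det(X(A)^T X(A))] = per A. -/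
open MeasureTheory ProbabilityTheory Matrix

open MeasureTheory ProbabilityTheory

lemma aux_integrable_integral_prod {ι Ω : Type*} [MeasurableSpace Ω] {μ : Measure Ω}
    [IsProbabilityMeasure μ] (g : ι → Ω → ℝ)
    (hind : iIndepFun g μ)
    (hgm : ∀ i, Measurable (g i)) (hgi : ∀ i, Integrable (g i) μ) (s : Finset ι) :
    Integrable (fun ω => ∏ i ∈ s, g i ω) μ ∧
      ∫ ω, ∏ i ∈ s, g i ω ∂μ = ∏ i ∈ s, ∫ ω, g i ω ∂μ := by
  classical
  induction s using Finset.induction_on with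
  | empty => simp [MeasureTheory.integrable_const]
  | @insert a s ha ih =>
    have hpair : IndepFun (∏ i ∈ s, g i) (g a) μ :=
      iIndepFun.indepFun_finsetProd_of_notMem hind hgm ha
    have hfe : (∏ i ∈ s, g i) = fun ω => ∏ i ∈ s, g i ω := by
      funext ω; simp [Finset.prod_apply]
    rw [hfe] at hpair
    have hint : Integrable (fun ω => ∏ i ∈ insert a s, g i ω) μ := by
      have := hpair.symm.integrable_mul (hgi a) ih.1
      have he : (g a * fun ω => ∏ i ∈ s, g i ω) = fun ω => ∏ i ∈ insert a s, g i ω := by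
        funext ω; simp [Finset.prod_insert ha]
      rwa [he] at this
    refine ⟨hint, ?_⟩
    have := hpair.symm.integral_mul_eq_mul_integral (hgi a).aestronglyMeasurable ih.1.aestronglyMeasurable
    have he : (g a * fun ω => ∏ i ∈ s, g i ω) = fun ω => ∏ i ∈ insert a s, g i ω := by
      funext ω; simp [Finset.prod_insert ha]
    rw [he] at this
    rw [this, Finset.prod_insert ha, ih.2]

lemma aux_prod_comp_pow {α β M : Type*} [Fintype α] [Fintype β] [DecidableEq β] [CommMonoid M]
    (G : α → β) (h : β → M) :
    ∏ u, h (G u) = ∏ b, h b ^ (Finset.univ.filter (fun u => G u = b)).card := by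
  rw [← Finset.prod_fiberwise Finset.univ G (fun u => h (G u))]
  refine Finset.prod_congr rfl fun b _ => ?_
  calc ∏ u ∈ Finset.univ.filter (fun u => G u = b), h (G u)
      = ∏ _u ∈ Finset.univ.filter (fun u => G u = b), h b :=
        Finset.prod_congr rfl (fun u hu => by
          simp only [Finset.mem_filter] at hu; rw [hu.2])
    _ = h b ^ (Finset.univ.filter (fun u => G u = b)).card := Finset.prod_const _

noncomputable def Gfun {n m : ℕ} (σ : Equiv.Perm (Fin m)) (f : Fin m → Fin n) :
    Fin m ⊕ Fin m → Fin n × Fin m :=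
  Sum.elim (fun j => (f j, σ j)) (fun j => (f j, j))

noncomputable def mult {n m : ℕ} (σ : Equiv.Perm (Fin m)) (f : Fin m → Fin n)
    (p : Fin n × Fin m) : ℕ :=
  (Finset.univ.filter (fun u => Gfun σ f u = p)).card

lemma mult_le_two {n m : ℕ} (σ : Equiv.Perm (Fin m)) (f : Fin m → Fin n) (p : Fin n × Fin m) :
    mult σ f p ≤ 2 := by
  obtain ⟨i, k⟩ := p
  have hsub : (Finset.univ.filter (fun u => Gfun σ f u = (i,k))) ⊆
      {Sum.inl (σ.symm k), Sum.inr k} := by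
    intro u hu
    simp only [Finset.mem_filter, Finset.mem_univ, true_and] at hu
    rcases u with j | j
    · simp only [Gfun, Sum.elim_inl, Prod.mk.injEq] at hu
      simp [← hu.2]
    · simp only [Gfun, Sum.elim_inr, Prod.mk.injEq] at hu
      simp [← hu.2]

  calc mult σ f (i,k) ≤ ({Sum.inl (σ.symm k), Sum.inr k} : Finset (Fin m ⊕ Fin m)).card :=
        Finset.card_le_card hsub
    _ ≤ 2 := Finset.card_insert_le _ _ |>.trans (by simp)

lemma mult_ne_one_iff {n m : ℕ} (σ : Equiv.Perm (Fin m)) (f : Fin m → Fin n) :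
    (∀ p, mult σ f p ≠ 1) ↔ ∀ j, f (σ j) = f j := by
  constructor
  · intro h j
    have h1 : Sum.inl j ∈ Finset.univ.filter (fun u => Gfun σ f u = (f j, σ j)) := by
      exact Finset.mem_filter.mpr ⟨Finset.mem_univ _, rfl⟩
    have hge : 1 ≤ mult σ f (f j, σ j) := Finset.card_pos.mpr ⟨_, h1⟩
    have h2 : 1 < mult σ f (f j, σ j) :=
      lt_of_le_of_ne hge (fun hc => h _ hc.symm)
    obtain ⟨u, hu, hne⟩ := Finset.exists_mem_ne h2 (Sum.inl j)
    simp only [Finset.mem_filter, Finset.mem_univ, true_and] at hu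
    rcases u with j' | j'
    · exfalso; apply hne
      simp only [Gfun, Sum.elim_inl, Prod.mk.injEq] at hu
      rw [σ.injective hu.2]
    · simp only [Gfun, Sum.elim_inr, Prod.mk.injEq] at hu
      rw [← hu.2, hu.1]
  · intro h p hp1
    have hne : (Finset.univ.filter (fun u => Gfun σ f u = p)).Nonempty := by
      rw [← Finset.card_pos]
      unfold mult at hp1
      omega
    obtain ⟨u, hu⟩ := hne
    simp only [Finset.mem_filter, Finset.mem_univ, true_and] at hu
    have key : ∀ j, p = (f j, σ j) → False := by
      intro j hj
      have h1 : Sum.inl j ∈ Finset.univ.filter (fun u => Gfun σ f u = p) := by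
        simp [Gfun, hj]
      have h2 : Sum.inr (σ j) ∈ Finset.univ.filter (fun u => Gfun σ f u = p) := by
        simp [Gfun, hj, h j]
      have : 1 < mult σ f p := by
        refine Finset.one_lt_card.mpr ⟨_, h1, _, h2, by simp⟩
      have hle := mult_le_two σ f p
      omega
    rcases u with j | j
    · exact key j hu.symm
    · refine key (σ.symm j) ?_
      rw [← hu]
      simp only [Gfun, Sum.elim_inr, Equiv.apply_symm_apply, Prod.mk.injEq]
      have := h (σ.symm j); rw [Equiv.apply_symm_apply] at this
      exact ⟨this, trivial⟩

lemma prod_pair_eq_prod_pow {n m : ℕ} (σ : Equiv.Perm (Fin m)) (f : Fin m → Fin n)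
    (h : Fin n × Fin m → ℝ) :
    (∏ j, h (f j, σ j) * h (f j, j)) = ∏ p, h p ^ mult σ f p := by
  calc (∏ j, h (f j, σ j) * h (f j, j))
      = ∏ u, h (Gfun σ f u) := by
        rw [Fintype.prod_sum_type, ← Finset.prod_mul_distrib]
        rfl
    _ = _ := aux_prod_comp_pow _ _

lemma aux_sum_sign {n m : ℕ} (f : Fin m → Fin n) :
    (∑ σ : Equiv.Perm (Fin m),
        if ∀ j, f (σ j) = f j then ((Equiv.Perm.sign σ : ℤ) : ℝ) else 0)
      = if Function.Injective f then 1 else 0 := by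
  classical
  by_cases hinj : Function.Injective f
  · rw [if_pos hinj]
    have : ∀ σ : Equiv.Perm (Fin m),
        (if ∀ j, f (σ j) = f j then ((Equiv.Perm.sign σ : ℤ) : ℝ) else 0)
        = if σ = 1 then ((Equiv.Perm.sign σ : ℤ) : ℝ) else 0 := by
      intro σ
      congr 1
      simp only [eq_iff_iff]
      constructor
      · intro h
        exact Equiv.ext fun j => hinj (h j)
      · intro h j
        rw [h]; simp
    rw [Finset.sum_congr rfl (fun σ _ => this σ), Finset.sum_ite_eq' Finset.univ]
    simp
  · rw [if_neg hinj]
    rw [Function.not_injective_iff] at hinj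
    obtain ⟨j, j', hfj, hne⟩ := hinj
    set τ := Equiv.swap j j' with hτ
    have hfτ : ∀ k, f (τ k) = f k := by
      intro k
      rcases Equiv.swap_apply_def j j' k with _
      by_cases h1 : k = j
      · simp [hτ, h1, Equiv.swap_apply_left, hfj]
      by_cases h2 : k = j'
      · simp [hτ, h2, Equiv.swap_apply_right, hfj]
      · simp [hτ, Equiv.swap_apply_of_ne_of_ne h1 h2]
    set F := fun σ : Equiv.Perm (Fin m) =>
      (if ∀ j, f (σ j) = f j then ((Equiv.Perm.sign σ : ℤ) : ℝ) else 0) with hF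
    have hkey : ∀ σ, F (τ * σ) = -F σ := by
      intro σ
      simp only [hF]
      have hcond : (∀ k, f ((τ * σ) k) = f k) ↔ (∀ k, f (σ k) = f k) := by
        constructor
        · intro h k
          have := h k
          rwa [Equiv.Perm.mul_apply, hfτ] at this
        · intro h k
          rw [Equiv.Perm.mul_apply, hfτ, h]
      by_cases h : ∀ k, f (σ k) = f k
      · rw [if_pos (hcond.mpr h), if_pos h]
        rw [_root_.map_mul]
        simp [hτ, Equiv.Perm.sign_swap hne]
      · rw [if_neg (fun hc => h (hcond.mp hc)), if_neg h]
        simp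
    have hswap : ∑ σ : Equiv.Perm (Fin m), F σ = ∑ σ : Equiv.Perm (Fin m), F (τ * σ) :=
      Fintype.sum_equiv (Equiv.mulLeft τ⁻¹) _ _ (fun σ => by simp)
    have h2 : ∑ σ : Equiv.Perm (Fin m), F (τ * σ) = -∑ σ : Equiv.Perm (Fin m), F σ := by
      rw [Finset.sum_congr rfl (fun σ _ => hkey σ), Finset.sum_neg_distrib]
    have h3 := hswap.trans h2
    linarith

lemma aux_image_orderEmbOfFin {n m : ℕ} (s : Finset (Fin n)) (h : s.card = m) :
    Finset.image (s.orderEmbOfFin h) Finset.univ = s := by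
  apply Finset.eq_of_subset_of_card_le
  · intro x hx
    simp only [Finset.mem_image, Finset.mem_univ, true_and] at hx
    obtain ⟨i, rfl⟩ := hx
    exact Finset.orderEmbOfFin_mem s h i
  · rw [Finset.card_image_of_injective _ (s.orderEmbOfFin h).injective]
    simp [h]

lemma aux_bij {n m : ℕ} (hnm : m ≤ n) (A : Matrix (Fin n) (Fin m) ℝ) :
    (∑ s ∈ ((Finset.univ : Finset (Fin n)).powersetCard m).attach,
       ∑ σ : Equiv.Perm (Fin m),
         ∏ j, A (s.1.orderEmbOfFin ((Finset.mem_powersetCard.mp s.2).2) (σ j)) j)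
    = ∑ f ∈ Finset.univ.filter (fun f : Fin m → Fin n => Function.Injective f),
        ∏ j, A (f j) j := by
  classical
  rw [← Finset.sum_product']
  refine Finset.sum_bij
    (fun p _ => fun j => p.1.1.orderEmbOfFin ((Finset.mem_powersetCard.mp p.1.2).2) (p.2 j))
    ?_ ?_ ?_ ?_
  · intro p _
    simp only [Finset.mem_filter, Finset.mem_univ, true_and]
    exact (p.1.1.orderEmbOfFin _).injective.comp p.2.injective
  · intro a ha b hb hEq
    obtain ⟨⟨s₁, hs₁⟩, σ₁⟩ := a
    obtain ⟨⟨s₂, hs₂⟩, σ₂⟩ := b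
    have hc₁ := (Finset.mem_powersetCard.mp hs₁).2
    have hc₂ := (Finset.mem_powersetCard.mp hs₂).2
    have himg : s₁ = s₂ := by
      rw [← aux_image_orderEmbOfFin s₁ hc₁, ← aux_image_orderEmbOfFin s₂ hc₂]
      ext y
      simp only [Finset.mem_image, Finset.mem_univ, true_and]
      constructor
      · rintro ⟨i, rfl⟩
        exact ⟨σ₂ (σ₁.symm i), by
          have := congrFun hEq (σ₁.symm i); simp only [Equiv.apply_symm_apply] at this; exact this.symm⟩
      · rintro ⟨i, rfl⟩
        exact ⟨σ₁ (σ₂.symm i), by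
          have := congrFun hEq (σ₂.symm i); simp only [Equiv.apply_symm_apply] at this; exact this⟩
    subst himg
    have hσ : σ₁ = σ₂ := by
      apply Equiv.ext
      intro j
      have := congrFun hEq j
      exact (s₁.orderEmbOfFin hc₁).injective this
    simp [hσ]
  · intro f hf
    simp only [Finset.mem_filter, Finset.mem_univ, true_and] at hf
    set s : Finset (Fin n) := Finset.image f Finset.univ with hs_def
    have hcard : s.card = m := by
      rw [hs_def, Finset.card_image_of_injective _ hf, Finset.card_univ, Fintype.card_fin]
    have hs : s ∈ (Finset.univ : Finset (Fin n)).powersetCard m :=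
      Finset.mem_powersetCard.mpr ⟨Finset.subset_univ _, hcard⟩
    have hmemF : ∀ j, f j ∈ s := fun j => by
      rw [hs_def]; exact Finset.mem_image_of_mem f (Finset.mem_univ j)
    set F : Fin m → {y // y ∈ s} := fun j => ⟨f j, hmemF j⟩ with hF_def
    have hFbij : Function.Bijective F := by
      rw [Fintype.bijective_iff_injective_and_card]
      constructor
      · intro a b hab
        exact hf (congrArg Subtype.val hab)
      · simp [Fintype.card_coe, hcard]
    set σ : Equiv.Perm (Fin m) :=
      (Equiv.ofBijective F hFbij).trans (s.orderIsoOfFin hcard).symm.toEquiv with hσ_def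
    refine ⟨⟨⟨s, hs⟩, σ⟩, Finset.mem_product.mpr ⟨Finset.mem_attach _ _, Finset.mem_univ _⟩, ?_⟩
    funext j
    show s.orderEmbOfFin _ (σ j) = f j
    have h1 : σ j = (s.orderIsoOfFin hcard).symm (F j) := rfl
    rw [h1, ← Finset.coe_orderIsoOfFin_apply s hcard]
    simp [hF_def]
  · intro p _
    rfl

lemma aux_pointwise {n m : ℕ} (A : Matrix (Fin n) (Fin m) ℝ) (xv : Fin n × Fin m → ℝ) :
    ((Matrix.of fun i j => Real.sqrt (A i j) * xv (i, j))ᵀ *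
        (Matrix.of fun i j => Real.sqrt (A i j) * xv (i, j))).det
      = ∑ σ : Equiv.Perm (Fin m), ∑ f : Fin m → Fin n,
          ((Equiv.Perm.sign σ : ℤ) : ℝ) *
            ((∏ j, Real.sqrt (A (f j) (σ j)) * Real.sqrt (A (f j) j)) *
              ∏ p, xv p ^ mult σ f p) := by
  classical
  rw [Matrix.det_apply]
  refine Finset.sum_congr rfl fun σ _ => ?_
  have hentry : (∏ j, ((Matrix.of fun i j => Real.sqrt (A i j) * xv (i, j))ᵀ *
        (Matrix.of fun i j => Real.sqrt (A i j) * xv (i, j))) (σ j) j)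
      = ∑ f : Fin m → Fin n, ∏ j,
          (Real.sqrt (A (f j) (σ j)) * xv (f j, σ j)) * (Real.sqrt (A (f j) j) * xv (f j, j)) := by
    calc (∏ j, ((Matrix.of fun i j => Real.sqrt (A i j) * xv (i, j))ᵀ *
        (Matrix.of fun i j => Real.sqrt (A i j) * xv (i, j))) (σ j) j)
        = ∏ j, ∑ i, (Real.sqrt (A i (σ j)) * xv (i, σ j)) * (Real.sqrt (A i j) * xv (i, j)) := by
          refine Finset.prod_congr rfl fun j _ => ?_
          rw [Matrix.mul_apply]
          rfl
      _ = ∑ f ∈ Fintype.piFinset (fun _ : Fin m => (Finset.univ : Finset (Fin n))), ∏ j,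
            (Real.sqrt (A (f j) (σ j)) * xv (f j, σ j)) * (Real.sqrt (A (f j) j) * xv (f j, j)) :=
          Finset.prod_univ_sum _ _
      _ = _ := by rw [Fintype.piFinset_univ]
  rw [hentry, Finset.smul_sum]
  refine Finset.sum_congr rfl fun f _ => ?_
  have hprod : (∏ j, (Real.sqrt (A (f j) (σ j)) * xv (f j, σ j)) *
        (Real.sqrt (A (f j) j) * xv (f j, j)))
      = (∏ j, Real.sqrt (A (f j) (σ j)) * Real.sqrt (A (f j) j)) *
          ∏ p, xv p ^ mult σ f p := by
    rw [← prod_pair_eq_prod_pow σ f xv, ← Finset.prod_mul_distrib]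
    exact Finset.prod_congr rfl fun j _ => by ring
  rw [hprod, Units.smul_def, zsmul_eq_mul]


/-- Rectangular case: for an `n × m` nonnegative matrix `A` with `n ≥ m`, and
independent mean-zero variance-one random variables, `E[det(X(A)ᵀ X(A))]` equals
the rectangular permanent `per A = ∑_{α ∈ Q_{m,n}} per A[α,⟨m⟩]`. -/
theorem expectation_det_eq_rectangular_permanent
    {Ω : Type*} [MeasurableSpace Ω] (μ : Measure Ω) [IsProbabilityMeasure μ]
    (n m : ℕ) (hnm : m ≤ n)
    (A : Matrix (Fin n) (Fin m) ℝ) (hA : ∀ i j, 0 ≤ A i j)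
    (x : Fin n × Fin m → Ω → ℝ)
    (hmeas : ∀ p, Measurable (x p))
    (hindep : iIndepFun x μ)
    (hmean : ∀ p, ∫ ω, x p ω ∂μ = 0)
    (hvar : ∀ p, ∫ ω, (x p ω) ^ 2 ∂μ = 1) :
    ∫ ω, ((Matrix.of fun i j => Real.sqrt (A i j) * x (i, j) ω)ᵀ *
          (Matrix.of fun i j => Real.sqrt (A i j) * x (i, j) ω)).det ∂μ
      = ∑ s ∈ ((Finset.univ : Finset (Fin n)).powersetCard m).attach,
          ∑ σ : Equiv.Perm (Fin m),
            ∏ i, A (s.1.orderEmbOfFin ((Finset.mem_powersetCard.mp s.2).2) i) (σ i) := by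
  classical
  -- integrability facts
  have hL2 : ∀ p, Integrable (fun ω => x p ω ^ 2) μ := by
    intro p
    by_contra h
    have h2 := hvar p
    rw [integral_undef h] at h2
    exact one_ne_zero h2.symm
  have hint1 : ∀ p, Integrable (x p) μ := fun p =>
    ((memLp_two_iff_integrable_sq (hmeas p).aestronglyMeasurable).mpr (hL2 p)).integrable
      one_le_two
  have hpow : ∀ (p) (e : ℕ), e ≤ 2 → Integrable (fun ω => x p ω ^ e) μ := by
    intro p e he
    interval_cases e
    · simpa using integrable_const (1 : ℝ)
    · simpa using hint1 p
    · exact hL2 p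
  have hival : ∀ (p) (e : ℕ), e ≤ 2 →
      ∫ ω, x p ω ^ e ∂μ = if e = 1 then 0 else 1 := by
    intro p e he
    interval_cases e
    · simp
    · simpa using hmean p
    · simpa using hvar p
  -- integral of the power products
  have hIint : ∀ (σ : Equiv.Perm (Fin m)) (f : Fin m → Fin n),
      Integrable (fun ω => ∏ p, x p ω ^ mult σ f p) μ ∧
        ∫ ω, ∏ p, x p ω ^ mult σ f p ∂μ = ∏ p, ∫ ω, x p ω ^ mult σ f p ∂μ := by
    intro σ f
    have hind' : iIndepFun (fun p ω => x p ω ^ mult σ f p) μ :=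
      hindep.comp (fun p y => y ^ mult σ f p) (fun p => measurable_id.pow_const _)
    exact aux_integrable_integral_prod _ hind'
      (fun p => (hmeas p).pow_const _) (fun p => hpow p _ (mult_le_two σ f p)) Finset.univ
  have hIval : ∀ (σ : Equiv.Perm (Fin m)) (f : Fin m → Fin n),
      ∫ ω, ∏ p, x p ω ^ mult σ f p ∂μ
        = if ∀ j, f (σ j) = f j then (1 : ℝ) else 0 := by
    intro σ f
    rw [(hIint σ f).2]
    by_cases h : ∀ p, mult σ f p ≠ 1
    · rw [if_pos ((mult_ne_one_iff σ f).mp h)]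
      refine Finset.prod_eq_one fun p _ => ?_
      rw [hival p _ (mult_le_two σ f p), if_neg (h p)]
    · push_neg at h
      obtain ⟨p, hp⟩ := h
      rw [if_neg (fun hc => (((mult_ne_one_iff σ f).mpr hc) p) hp)]
      refine Finset.prod_eq_zero (Finset.mem_univ p) ?_
      rw [hival p _ (mult_le_two σ f p), if_pos hp]
  -- compute the expectation
  have hC : ∀ (σ : Equiv.Perm (Fin m)) (f : Fin m → Fin n), (∀ j, f (σ j) = f j) →
      (∏ j, Real.sqrt (A (f j) (σ j)) * Real.sqrt (A (f j) j)) = ∏ j, A (f j) j := by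
    intro σ f h
    rw [Finset.prod_mul_distrib]
    have h1 : (∏ j, Real.sqrt (A (f j) (σ j))) = ∏ j, Real.sqrt (A (f j) j) := by
      rw [← Equiv.prod_comp σ (fun j => Real.sqrt (A (f j) j))]
      exact Finset.prod_congr rfl fun j _ => by rw [h j]
    rw [h1, ← Finset.prod_mul_distrib]
    exact Finset.prod_congr rfl fun j _ => Real.mul_self_sqrt (hA _ _)
  calc ∫ ω, ((Matrix.of fun i j => Real.sqrt (A i j) * x (i, j) ω)ᵀ *
          (Matrix.of fun i j => Real.sqrt (A i j) * x (i, j) ω)).det ∂μ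
      = ∫ ω, ∑ σ : Equiv.Perm (Fin m), ∑ f : Fin m → Fin n,
          ((Equiv.Perm.sign σ : ℤ) : ℝ) *
            ((∏ j, Real.sqrt (A (f j) (σ j)) * Real.sqrt (A (f j) j)) *
              ∏ p, x p ω ^ mult σ f p) ∂μ := by
        congr 1
        funext ω
        exact aux_pointwise A (fun p => x p ω)
    _ = ∑ σ : Equiv.Perm (Fin m), ∑ f : Fin m → Fin n,
          ((Equiv.Perm.sign σ : ℤ) : ℝ) *
            ((∏ j, Real.sqrt (A (f j) (σ j)) * Real.sqrt (A (f j) j)) *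
              ∫ ω, ∏ p, x p ω ^ mult σ f p ∂μ) := by
        rw [integral_finset_sum]
        · refine Finset.sum_congr rfl fun σ _ => ?_
          rw [integral_finset_sum]
          · refine Finset.sum_congr rfl fun f _ => ?_
            rw [integral_const_mul, integral_const_mul]
          · exact fun f _ => ((hIint σ f).1.const_mul _).const_mul _
        · exact fun σ _ => integrable_finset_sum _
            (fun f _ => ((hIint σ f).1.const_mul _).const_mul _)
    _ = ∑ σ : Equiv.Perm (Fin m), ∑ f : Fin m → Fin n,
          (if ∀ j, f (σ j) = f j then ((Equiv.Perm.sign σ : ℤ) : ℝ) * ∏ j, A (f j) j else 0) := by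
        refine Finset.sum_congr rfl fun σ _ => Finset.sum_congr rfl fun f _ => ?_
        rw [hIval σ f]
        by_cases h : ∀ j, f (σ j) = f j
        · rw [if_pos h, if_pos h, hC σ f h, mul_one]
        · rw [if_neg h, if_neg h, mul_zero, mul_zero]
    _ = ∑ f : Fin m → Fin n, (∏ j, A (f j) j) *
          ∑ σ : Equiv.Perm (Fin m),
            (if ∀ j, f (σ j) = f j then ((Equiv.Perm.sign σ : ℤ) : ℝ) else 0) := by
        rw [Finset.sum_comm]
        refine Finset.sum_congr rfl fun f _ => ?_
        rw [Finset.mul_sum]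
        refine Finset.sum_congr rfl fun σ _ => ?_
        rw [mul_ite, mul_zero]
        by_cases h : ∀ j, f (σ j) = f j
        · rw [if_pos h, if_pos h, mul_comm]
        · rw [if_neg h, if_neg h]
    _ = ∑ f : Fin m → Fin n, (∏ j, A (f j) j) *
          (if Function.Injective f then 1 else 0) := by
        exact Finset.sum_congr rfl fun f _ => by rw [aux_sum_sign]
    _ = ∑ f ∈ Finset.univ.filter (fun f : Fin m → Fin n => Function.Injective f),
          ∏ j, A (f j) j := by
        rw [Finset.sum_filter]
        exact Finset.sum_congr rfl fun f _ => by rw [mul_ite, mul_one, mul_zero]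
    _ = ∑ s ∈ ((Finset.univ : Finset (Fin n)).powersetCard m).attach,
          ∑ σ : Equiv.Perm (Fin m),
            ∏ j, A (s.1.orderEmbOfFin ((Finset.mem_powersetCard.mp s.2).2) (σ j)) j :=
        (aux_bij hnm A).symm
    _ = _ := by
        refine Finset.sum_congr rfl fun s _ => ?_
        refine (Fintype.sum_equiv (Equiv.inv (Equiv.Perm (Fin m))) _ _ (fun σ => ?_)).symm
        rw [← Equiv.prod_comp σ
          (fun j => A (s.1.orderEmbOfFin ((Finset.mem_powersetCard.mp s.2).2)
            ((Equiv.inv (Equiv.Perm (Fin m)) σ) j)) j)]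
        simp
end

section
/- Let V be an n×m real matrix with n ≥ m, let v_k be its k-th column and V_k the n×(m-1) matrix obtained by deleting the k-th column. If V_k^T V_k is invertible, then det(V^T V) = det(V_k^T V_k) · v_k^T (I - V_k (V_k^T V_k)^{-1} V_k^T) v_k. -/
open Matrix

/-- Column-deletion determinant identity: if `V` is `n × (m+1)` with `n ≥ m+1`,
`v` is its `k`-th column and `W` the matrix with that column deleted, and
`Wᵀ W` is invertible, then
`det (Vᵀ V) = det (Wᵀ W) * vᵀ (I - W (Wᵀ W)⁻¹ Wᵀ) v`. -/
theorem det_gram_column_deletion (n m : ℕ) (hnm : m + 1 ≤ n)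
    (V : Matrix (Fin n) (Fin (m + 1)) ℝ) (k : Fin (m + 1))
    (W : Matrix (Fin n) (Fin m) ℝ) (hW : W = V.submatrix id k.succAbove)
    (v : Fin n → ℝ) (hv : v = fun i => V i k)
    (hinv : IsUnit (Wᵀ * W).det) :
    (Vᵀ * V).det
      = (Wᵀ * W).det * (v ⬝ᵥ ((1 - W * (Wᵀ * W)⁻¹ * Wᵀ) *ᵥ v)) := by
  have hInv : Invertible (Wᵀ * W) := (Wᵀ * W).invertibleOfIsUnitDet hinv
  set C : Matrix (Fin n) Unit ℝ := Matrix.of (fun i _ => v i) with hC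
  let e : Fin m ⊕ Unit ≃ Fin (m + 1) :=
    (Equiv.optionEquivSumPUnit (Fin m)).symm.trans (finSuccEquiv' k).symm
  have he1 : ∀ i : Fin m, e (Sum.inl i) = k.succAbove i := by
    intro i; simp [e]
  have he2 : e (Sum.inr ()) = k := by
    simp [e]
  have hsub : (Vᵀ * V).submatrix e e =
      fromBlocks (Wᵀ * W) (Wᵀ * C) (Cᵀ * W) (Cᵀ * C) := by
    ext (i | i) (j | j) <;>
      simp [he1, he2, hW, hv, hC, mul_apply, fromBlocks]
  have hdet : (Vᵀ * V).det = (fromBlocks (Wᵀ * W) (Wᵀ * C) (Cᵀ * W) (Cᵀ * C)).det := by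
    rw [← hsub, det_submatrix_equiv_self]
  rw [hdet, det_fromBlocks₁₁]
  congr 1
  have hM : Cᵀ * C - Cᵀ * W * ⅟ (Wᵀ * W) * (Wᵀ * C)
      = Cᵀ * ((1 - W * (Wᵀ * W)⁻¹ * Wᵀ) * C) := by
    rw [invOf_eq_nonsing_inv]
    rw [Matrix.sub_mul, Matrix.mul_sub, Matrix.one_mul]
    simp [Matrix.mul_assoc]
  rw [hM, det_unique]
  simp [hC, mul_apply, dotProduct, mulVec]
end

section
/- Let V be an n×m real matrix with n ≥ m such that V^T V and V_k^T V_k are invertible, where V_k is V with its k-th column v_k deleted. Then the (k,k)-entry of (V^T V)^{-1} equals (v_k^T P_k v_k)^{-1}, where P_k = I - V_k(V_k^T V_k)^{-1} V_k^T. -/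
open Matrix

/-- The `(k,k)` entry of `(Vᵀ V)⁻¹` equals `(vₖᵀ Pₖ vₖ)⁻¹` where
`Pₖ = I - Vₖ (Vₖᵀ Vₖ)⁻¹ Vₖᵀ` and `Vₖ` is `V` with its `k`-th column `vₖ` deleted. -/
theorem inv_gram_diag_entry (n m : ℕ) (hnm : m + 1 ≤ n)
    (V : Matrix (Fin n) (Fin (m + 1)) ℝ) (k : Fin (m + 1))
    (W : Matrix (Fin n) (Fin m) ℝ) (hW : W = V.submatrix id k.succAbove)
    (v : Fin n → ℝ) (hv : v = fun i => V i k)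
    (hinvV : IsUnit (Vᵀ * V).det) (hinvW : IsUnit (Wᵀ * W).det) :
    ((Vᵀ * V)⁻¹) k k = (v ⬝ᵥ ((1 - W * (Wᵀ * W)⁻¹ * Wᵀ) *ᵥ v))⁻¹ := by
  set u : Fin m → ℝ := ((Wᵀ * W)⁻¹ * Wᵀ) *ᵥ v with hu
  set p : Fin n → ℝ := v - W *ᵥ u with hp
  set w : Fin (m + 1) → ℝ := k.insertNth 1 (fun j => -u j) with hw
  have hwk : w k = 1 := by simp [hw]
  have hws : ∀ j, w (k.succAbove j) = -u j := by
    intro j; simp [hw]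
  have hVw : V *ᵥ w = p := by
    funext r
    simp only [mulVec, dotProduct]
    rw [Fin.sum_univ_succAbove _ k]
    simp only [hwk, hws, mul_one, mul_neg, hp, Pi.sub_apply, hv, mulVec, dotProduct, hW,
      submatrix_apply, id]
    rw [Finset.sum_neg_distrib, ← sub_eq_add_neg]
  have hWp : Wᵀ *ᵥ p = 0 := by
    have h0 : Wᵀ * W * (Wᵀ * W)⁻¹ * Wᵀ = Wᵀ := by
      rw [Matrix.mul_nonsing_inv _ hinvW, Matrix.one_mul]
    simp [hp, mulVec_sub, hu, mulVec_mulVec, ← Matrix.mul_assoc, h0]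
  have hGw : (Vᵀ * V) *ᵥ w = (v ⬝ᵥ p) • (Pi.single k 1 : Fin (m + 1) → ℝ) := by
    rw [← mulVec_mulVec, hVw]
    funext i
    rcases eq_or_ne i k with rfl | hik
    · simp [mulVec, dotProduct, hv, Pi.single_apply]
    · obtain ⟨j, rfl⟩ := Fin.exists_succAbove_eq hik
      have : (Wᵀ *ᵥ p) j = 0 := by rw [hWp]; rfl
      simp only [mulVec, dotProduct, transpose_apply, hW, submatrix_apply, id] at this ⊢
      rw [this]
      simp [Pi.single_apply, (Fin.succAbove_ne k j)]
  have hkey : (v ⬝ᵥ p) * ((Vᵀ * V)⁻¹ k k) = 1 := by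
    have h1 := congrArg (fun x => ((Vᵀ * V)⁻¹ *ᵥ x) k) hGw
    simp only [mulVec_mulVec, Matrix.nonsing_inv_mul _ hinvV, one_mulVec] at h1
    rw [hwk, mulVec_smul] at h1
    have h2 : ((Vᵀ * V)⁻¹ *ᵥ (Pi.single k 1 : Fin (m + 1) → ℝ)) = fun i => (Vᵀ * V)⁻¹ i k := by
      funext i; simp [mulVec, dotProduct, Pi.single_apply]
    rw [h2] at h1
    simpa using h1.symm
  have hrhs : v ⬝ᵥ ((1 - W * (Wᵀ * W)⁻¹ * Wᵀ) *ᵥ v) = v ⬝ᵥ p := by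
    rw [sub_mulVec, one_mulVec, hp, hu, Matrix.mul_assoc, ← mulVec_mulVec]
  rw [hrhs]
  exact eq_inv_of_mul_eq_one_right hkey
end

section
/- Let P be an orthogonal projection on ℝ^n of rank n-m+1, let D be a diagonal matrix with entries sqrt(a_i), a ≤ a_i ≤ b, 0 < a ≤ b, and let x be a standard Gaussian vector in ℝ^n. Then a·Σ_{i=1}^{n-m+1} ŷ_i^2 ≤ x^T DPD x ≤ b·Σ_{i=1}^{n-m+1} ŷ_i^2 in distribution, where ŷ_i are i.i.d. standard Gaussians; in particular x^T DPD x stochastically dominates a times a chi-square random variable with n-m+1 degrees of freedom. -/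
open MeasureTheory ProbabilityTheory Matrix
open scoped ENNReal

lemma lemA {Ω : Type*} [MeasurableSpace Ω] (μ : Measure Ω) [IsProbabilityMeasure μ]
    {ι : Type*} [Fintype ι] (x : Ω → ι → ℝ) (hxmeas : ∀ i, Measurable fun ω => x ω i)
    (hxindep : iIndepFun (fun i ω => x ω i) μ)
    (hxlaw : ∀ i, Measure.map (fun ω => x ω i) μ = gaussianReal 0 1) :
    Measure.map x μ = Measure.pi (fun _ : ι => gaussianReal 0 1) := by
  refine (Measure.pi_eq fun s hs => ?_).symm
  rw [Measure.map_apply (measurable_pi_lambda _ hxmeas) (MeasurableSet.univ_pi hs)]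
  have hpre : x ⁻¹' (Set.univ.pi s) = ⋂ i, (fun ω => x ω i) ⁻¹' s i := by
    ext ω; simp [Set.mem_pi]
  rw [hpre, hxindep.meas_iInter (fun i => ⟨s i, hs i, rfl⟩)]
  refine Finset.prod_congr rfl fun i _ => ?_
  rw [← hxlaw i, Measure.map_apply (hxmeas i) (hs i)]

lemma lemB {r n : ℕ} (g : Fin r → Fin n) (hg : Function.Injective g)
    (ν : Measure ℝ) [IsProbabilityMeasure ν] :
    Measure.map (fun (z : Fin n → ℝ) (j : Fin r) => z (g j))
      (Measure.pi fun _ : Fin n => ν) = Measure.pi (fun _ : Fin r => ν) := by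
  refine (Measure.pi_eq fun s hs => ?_).symm
  have hmeas : Measurable fun (z : Fin n → ℝ) (j : Fin r) => z (g j) :=
    measurable_pi_lambda _ fun j => measurable_pi_apply _
  rw [Measure.map_apply hmeas (MeasurableSet.univ_pi hs)]
  classical
  set t : Fin n → Set ℝ := fun i => if h : ∃ j, g j = i then s h.choose else Set.univ with ht
  have htg : ∀ j, t (g j) = s j := by
    intro j
    have h : ∃ j', g j' = g j := ⟨j, rfl⟩
    simp only [ht, dif_pos h]
    rw [hg h.choose_spec]
  have hpre : (fun (z : Fin n → ℝ) (j : Fin r) => z (g j)) ⁻¹' Set.univ.pi s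
      = Set.univ.pi t := by
    ext z
    simp only [Set.mem_preimage, Set.mem_pi, Set.mem_univ, true_implies]
    constructor
    · intro h i
      by_cases hi : ∃ j, g j = i
      · simp only [ht, dif_pos hi]
        have := h hi.choose; rwa [hi.choose_spec] at this
      · simp [ht, dif_neg hi]
    · intro h j
      have := h (g j); rwa [htg j] at this
  rw [hpre, Measure.pi_pi]
  calc ∏ i : Fin n, ν (t i)
      = ∏ i ∈ Finset.univ.image g, ν (t i) := by
        refine (Finset.prod_subset (Finset.subset_univ _) ?_).symm
        intro i _ hi
        have hni : ¬ ∃ j, g j = i := by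
          rintro ⟨j, rfl⟩
          exact hi (Finset.mem_image_of_mem g (Finset.mem_univ j))
        simp [ht, dif_neg hni]
    _ = ∏ j : Fin r, ν (t (g j)) :=
        Finset.prod_image (fun a _ b _ h => hg h)
    _ = ∏ j : Fin r, ν (s j) := by
        refine Finset.prod_congr rfl fun j _ => by rw [htg j]

lemma lintegral_pi_fin_prod {n : ℕ} (f : Fin n → ℝ → ℝ≥0∞) (hf : ∀ i, Measurable (f i)) :
    ∫⁻ z : Fin n → ℝ, ∏ i, f i (z i) ∂(Measure.pi fun _ => volume)
      = ∏ i, ∫⁻ x, f i x := by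
  induction n with
  | zero => simp [Measure.pi_of_empty]
  | succ n ih =>
    have hmp := (measurePreserving_piFinSuccAbove (fun _ : Fin (n + 1) => (volume : Measure ℝ)) 0)
    rw [MeasurePreserving.lintegral_map_equiv _ _ (hmp.symm _)]
    have heq : ∀ p : ℝ × (Fin n → ℝ),
        (∏ i, f i ((MeasurableEquiv.piFinSuccAbove (fun _ => ℝ) 0).symm p i))
          = f 0 p.1 * ∏ i : Fin n, f i.succ (p.2 i) := by
      intro p
      rw [Fin.prod_univ_succ]
      simp [MeasurableEquiv.piFinSuccAbove_symm_apply, Fin.insertNthEquiv,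
        Fin.insertNth_zero, Fin.zero_succAbove]
    simp_rw [heq]
    rw [lintegral_prod_mul (f := fun x : ℝ => f 0 x)
      (g := fun w : Fin n → ℝ => ∏ i, f i.succ (w i)) (hf 0).aemeasurable
      (Finset.measurable_prod _ fun i _ =>
        (hf i.succ).comp (measurable_pi_apply i)).aemeasurable]
    rw [ih (fun i => f i.succ) (fun i => hf i.succ), Fin.prod_univ_succ]

lemma pi_gaussian_withDensity (n : ℕ) :
    Measure.pi (fun _ : Fin n => gaussianReal 0 1)
      = (Measure.pi fun _ : Fin n => (volume : Measure ℝ)).withDensity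
          (fun z => ∏ i, gaussianPDF 0 1 (z i)) := by
  refine Measure.pi_eq fun s hs => ?_
  rw [withDensity_apply _ (MeasurableSet.univ_pi hs),
    ← lintegral_indicator (MeasurableSet.univ_pi hs)]
  have hind : ∀ z : Fin n → ℝ,
      Set.indicator (Set.univ.pi s) (fun z => ∏ i, gaussianPDF 0 1 (z i)) z
        = ∏ i, Set.indicator (s i) (gaussianPDF 0 1) (z i) := by
    intro z
    by_cases hz : z ∈ Set.univ.pi s
    · rw [Set.indicator_of_mem hz]
      refine Finset.prod_congr rfl fun i _ => ?_
      rw [Set.indicator_of_mem (hz i (Set.mem_univ i))]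
    · rw [Set.indicator_of_notMem hz]
      obtain ⟨i, hi⟩ := by simpa [Set.mem_pi] using hz
      exact (Finset.prod_eq_zero (Finset.mem_univ i)
        (by rw [Set.indicator_of_notMem hi])).symm
  simp_rw [hind]
  rw [lintegral_pi_fin_prod _ (fun i => (measurable_gaussianPDF 0 1).indicator (hs i))]
  refine Finset.prod_congr rfl fun i _ => ?_
  rw [lintegral_indicator (hs i), gaussianReal_of_var_ne_zero 0 one_ne_zero,
    withDensity_apply _ (hs i)]

lemma prod_gaussianPDF_eq {n : ℕ} (w z : Fin n → ℝ) (h : ∑ i, (w i)^2 = ∑ i, (z i)^2) :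
    ∏ i, gaussianPDF 0 1 (w i) = ∏ i, gaussianPDF 0 1 (z i) := by
  have key : ∀ v : Fin n → ℝ, ∏ i, gaussianPDF 0 1 (v i)
      = ENNReal.ofReal ((Real.sqrt (2 * Real.pi))⁻¹ ^ n * Real.exp (-(∑ i, (v i)^2) / 2)) := by
    intro v
    simp_rw [gaussianPDF_def, gaussianPDFReal_def]
    rw [← ENNReal.ofReal_prod_of_nonneg (fun i _ =>
      mul_nonneg (inv_nonneg.2 (Real.sqrt_nonneg _)) (Real.exp_nonneg _))]
    congr 1
    rw [Finset.prod_mul_distrib, Finset.prod_const, ← Real.exp_sum]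
    simp only [NNReal.coe_one, mul_one, sub_zero, Finset.card_univ, Fintype.card_fin]
    congr 1
    rw [← Finset.sum_div]
    congr 1
    rw [← Finset.sum_neg_distrib]
  rw [key w, key z, h]

lemma map_mulVec_pi_gaussian {n : ℕ} (Q : Matrix (Fin n) (Fin n) ℝ) (hQ : Qᵀ * Q = 1) :
    Measure.map (fun z => Q *ᵥ z) (Measure.pi fun _ : Fin n => gaussianReal 0 1)
      = Measure.pi fun _ : Fin n => gaussianReal 0 1 := by
  classical
  have hQQT : Q * Qᵀ = 1 := mul_eq_one_comm.mp hQ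
  have hdet2 : Q.det * Q.det = 1 := by
    have := congrArg Matrix.det hQ
    rwa [Matrix.det_mul, Matrix.det_transpose, Matrix.det_one] at this
  have hdet : Q.det ≠ 0 := by
    intro h; rw [h, mul_zero] at hdet2; exact zero_ne_one hdet2
  have habs : |Q.det| = 1 := by
    rcases mul_self_eq_one_iff.mp hdet2 with h | h <;> simp [h]
  -- the sum of squares is preserved
  have hsum : ∀ z : Fin n → ℝ, ∑ i, (Q *ᵥ z) i ^ 2 = ∑ i, z i ^ 2 := by
    intro z
    have h1 : ∀ w : Fin n → ℝ, ∑ i, w i ^ 2 = w ⬝ᵥ w := by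
      intro w; simp [dotProduct, sq]
    rw [h1, h1, Matrix.dotProduct_mulVec, Matrix.vecMul_mulVec, hQ, Matrix.vecMul_one]
  -- measurable equiv given by Q
  have hcontQ : Continuous fun z : Fin n → ℝ => Q *ᵥ z :=
    continuous_const.matrix_mulVec continuous_id
  have hcontQT : Continuous fun z : Fin n → ℝ => Qᵀ *ᵥ z :=
    continuous_const.matrix_mulVec continuous_id
  let e : (Fin n → ℝ) ≃ᵐ (Fin n → ℝ) :=
    { toFun := fun z => Q *ᵥ z
      invFun := fun z => Qᵀ *ᵥ z
      left_inv := fun z => by show Qᵀ *ᵥ (Q *ᵥ z) = z; rw [Matrix.mulVec_mulVec, hQ, Matrix.one_mulVec]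
      right_inv := fun z => by show Q *ᵥ (Qᵀ *ᵥ z) = z; rw [Matrix.mulVec_mulVec, hQQT, Matrix.one_mulVec]
      measurable_toFun := hcontQ.measurable
      measurable_invFun := hcontQT.measurable }
  -- volume invariance
  have hvol : Measure.map (fun z : Fin n → ℝ => Q *ᵥ z)
      (Measure.pi fun _ : Fin n => (volume : Measure ℝ))
        = Measure.pi fun _ : Fin n => (volume : Measure ℝ) := by
    have h1 := Real.map_matrix_volume_pi_eq_smul_volume_pi hdet
    have h2 : ⇑(Matrix.toLin' Q) = fun z : Fin n → ℝ => Q *ᵥ z := by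
      funext z; rw [Matrix.toLin'_apply]
    rw [h2] at h1
    rw [MeasureTheory.volume_pi] at h1
    rw [h1, inv_eq_one_div, abs_div, abs_one, habs]
    simp
  -- density invariance
  have hF : ∀ z : Fin n → ℝ, (∏ i, gaussianPDF 0 1 ((Q *ᵥ z) i))
      = ∏ i, gaussianPDF 0 1 (z i) := fun z => prod_gaussianPDF_eq _ _ (hsum z)
  rw [pi_gaussian_withDensity]
  ext A hA
  rw [Measure.map_apply hcontQ.measurable hA,
    withDensity_apply _ (hcontQ.measurable hA), withDensity_apply _ hA]
  have hmF : Measurable fun z : Fin n → ℝ => ∏ i, gaussianPDF 0 1 (z i) :=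
    Finset.measurable_prod _ fun i _ =>
      (measurable_gaussianPDF 0 1).comp (measurable_pi_apply i)
  calc ∫⁻ z in (fun z => Q *ᵥ z) ⁻¹' A, ∏ i, gaussianPDF 0 1 (z i)
          ∂(Measure.pi fun _ : Fin n => (volume : Measure ℝ))
      = ∫⁻ z in (fun z => Q *ᵥ z) ⁻¹' A, ∏ i, gaussianPDF 0 1 ((Q *ᵥ z) i)
          ∂(Measure.pi fun _ : Fin n => (volume : Measure ℝ)) := by
        refine setLIntegral_congr_fun (hcontQ.measurable hA) (fun z _ => ?_)
        rw [hF]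
    _ = ∫⁻ w in A, ∏ i, gaussianPDF 0 1 (w i)
          ∂(Measure.pi fun _ : Fin n => (volume : Measure ℝ)) := by
        rw [← setLIntegral_map hA hmF hcontQ.measurable, hvol]

section LinAlg
variable {n : ℕ} {P D : Matrix (Fin n) (Fin n) ℝ} {av : Fin n → ℝ} {a b : ℝ}

lemma S_isHermitian (hsymm : Pᵀ = P) (hDT : Dᵀ = D) : (D * P * D).IsHermitian := by
  rw [Matrix.IsHermitian, Matrix.conjTranspose_eq_transpose_of_trivial,
    Matrix.transpose_mul, Matrix.transpose_mul, hDT, hsymm, Matrix.mul_assoc]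

lemma eigen_bound (hproj : P * P = P) (hsymm : Pᵀ = P)
    (ha : 0 < a) (hav : ∀ i, a ≤ av i ∧ av i ≤ b)
    (hD : D = Matrix.diagonal fun i => Real.sqrt (av i))
    (hS : (D * P * D).IsHermitian) (i : Fin n) (hi : hS.eigenvalues i ≠ 0) :
    a ≤ hS.eigenvalues i ∧ hS.eigenvalues i ≤ b := by
  have hDT : Dᵀ = D := by rw [hD]; exact Matrix.diagonal_transpose _
  have hDD : D * D = Matrix.diagonal av := by
    have h1 : (fun i => Real.sqrt (av i) * Real.sqrt (av i)) = av :=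
      funext fun j => Real.mul_self_sqrt (le_of_lt (lt_of_lt_of_le ha (hav j).1))
    rw [hD, Matrix.diagonal_mul_diagonal, h1]
  set lam := hS.eigenvalues i with hlam
  set v : Fin n → ℝ := ⇑(hS.eigenvectorBasis i) with hv
  have hev : (D * P * D) *ᵥ v = lam • v := hS.mulVec_eigenvectorBasis i
  have hvne : v ≠ 0 := by
    intro h
    have h1 : ‖hS.eigenvectorBasis i‖ = 1 := hS.eigenvectorBasis.orthonormal.1 i
    have h0 : hS.eigenvectorBasis i = 0 := by
      ext j; exact congrFun h j
    rw [h0, norm_zero] at h1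
    exact zero_ne_one h1
  set u : Fin n → ℝ := (P * D) *ᵥ v with hu
  have hPu : P *ᵥ u = u := by
    rw [hu, Matrix.mulVec_mulVec, ← Matrix.mul_assoc, hproj]
  have hSfact : D * P * D = (P * D)ᵀ * (P * D) := by
    rw [Matrix.transpose_mul, hDT, hsymm]
    calc D * P * D = D * (P * P) * D := by rw [hproj]
      _ = D * P * (P * D) := by simp only [Matrix.mul_assoc]
  have hc1 : lam * (v ⬝ᵥ v) = u ⬝ᵥ u := by
    have h1 : v ⬝ᵥ ((D * P * D) *ᵥ v) = lam * (v ⬝ᵥ v) := by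
      rw [hev, dotProduct_smul, smul_eq_mul]
    rw [← h1, hSfact, ← Matrix.mulVec_mulVec, Matrix.dotProduct_mulVec,
      Matrix.vecMul_transpose]
  have hc2 : (P * (D * D)) *ᵥ u = lam • u := by
    rw [hu, Matrix.mulVec_mulVec]
    have hassoc : P * (D * D) * (P * D) = P * D * (D * P * D) := by
      simp only [Matrix.mul_assoc]
    rw [hassoc, ← Matrix.mulVec_mulVec, hev, Matrix.mulVec_smul]
  have hc3 : u ⬝ᵥ (Matrix.diagonal av *ᵥ u) = lam * (u ⬝ᵥ u) := by
    have h1 : u ⬝ᵥ ((P * (D * D)) *ᵥ u) = lam * (u ⬝ᵥ u) := by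
      rw [hc2, dotProduct_smul, smul_eq_mul]
    have h2 : u ⬝ᵥ ((P * (D * D)) *ᵥ u) = u ⬝ᵥ ((D * D) *ᵥ u) := by
      rw [← Matrix.mulVec_mulVec, Matrix.dotProduct_mulVec]
      congr 1
      calc u ᵥ* P = u ᵥ* Pᵀᵀ := by rw [Matrix.transpose_transpose]
        _ = Pᵀ *ᵥ u := Matrix.vecMul_transpose _ _
        _ = u := by rw [hsymm, hPu]
    rw [← hDD, ← h2, h1]
  have huu_pos : 0 < u ⬝ᵥ u := by
    have hnn : 0 ≤ u ⬝ᵥ u := by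
      simp only [dotProduct]
      exact Finset.sum_nonneg fun j _ => mul_self_nonneg _
    rcases lt_or_eq_of_le hnn with h | h
    · exact h
    · exfalso
      have hu0 : u = 0 := dotProduct_self_eq_zero.mp h.symm
      rw [hu0] at hc1
      simp only [dotProduct_zero, zero_dotProduct] at hc1
      have : v ⬝ᵥ v ≠ 0 := fun hvv => hvne (dotProduct_self_eq_zero.mp hvv)
      exact hi (by rcases mul_eq_zero.mp hc1 with h' | h'; exact h'; exact absurd h' this)
  have hdiag : u ⬝ᵥ (Matrix.diagonal av *ᵥ u) = ∑ j, av j * (u j)^2 := by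
    simp only [dotProduct, Matrix.mulVec_diagonal]
    exact Finset.sum_congr rfl fun j _ => by ring
  have huu : u ⬝ᵥ u = ∑ j, (u j)^2 := by simp [dotProduct, sq]
  have hlow : a * (u ⬝ᵥ u) ≤ lam * (u ⬝ᵥ u) := by
    rw [← hc3, hdiag, huu, Finset.mul_sum]
    exact Finset.sum_le_sum fun j _ => mul_le_mul_of_nonneg_right (hav j).1 (sq_nonneg _)
  have hhigh : lam * (u ⬝ᵥ u) ≤ b * (u ⬝ᵥ u) := by
    rw [← hc3, hdiag, huu, Finset.mul_sum]
    exact Finset.sum_le_sum fun j _ => mul_le_mul_of_nonneg_right (hav j).2 (sq_nonneg _)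
  exact ⟨le_of_mul_le_mul_right hlow huu_pos, le_of_mul_le_mul_right hhigh huu_pos⟩

lemma S_rank (ha : 0 < a) (hav : ∀ i, a ≤ av i ∧ av i ≤ b)
    (hD : D = Matrix.diagonal fun i => Real.sqrt (av i)) :
    (D * P * D).rank = P.rank := by
  have hdet : IsUnit D.det := by
    rw [hD, Matrix.det_diagonal]
    refine (Finset.prod_ne_zero_iff.mpr fun j _ => ?_).isUnit
    exact ne_of_gt (Real.sqrt_pos.mpr (lt_of_lt_of_le ha (hav j).1))
  rw [Matrix.rank_mul_eq_left_of_isUnit_det D (D * P) hdet,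
    Matrix.rank_mul_eq_right_of_isUnit_det D P hdet]

end LinAlg

/-- For `P` an orthogonal projection of rank `n - m + 1`, `D = diag(√aᵢ)` with
`a ≤ aᵢ ≤ b`, and `x` a standard Gaussian vector, the quadratic form
`xᵀ D P D x` is stochastically between `a` and `b` times a chi-square with
`n - m + 1` degrees of freedom. -/
theorem quadratic_form_stochastic_chi_square_bounds
    {Ω : Type*} [MeasurableSpace Ω] (μ : Measure Ω) [IsProbabilityMeasure μ]
    (n m : ℕ) (hm : 1 ≤ m) (hmn : m ≤ n)
    (P : Matrix (Fin n) (Fin n) ℝ) (hproj : P * P = P) (hsymm : Pᵀ = P)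
    (hrank : P.rank = n - m + 1)
    (av : Fin n → ℝ) (a b : ℝ) (ha : 0 < a) (hab : a ≤ b)
    (hav : ∀ i, a ≤ av i ∧ av i ≤ b)
    (D : Matrix (Fin n) (Fin n) ℝ) (hD : D = Matrix.diagonal fun i => Real.sqrt (av i))
    (x : Ω → Fin n → ℝ) (hxmeas : ∀ i, Measurable fun ω => x ω i)
    (hxindep : iIndepFun (fun i ω => x ω i) μ)
    (hxlaw : ∀ i, Measure.map (fun ω => x ω i) μ = gaussianReal 0 1)
    (y : Ω → Fin (n - m + 1) → ℝ) (hymeas : ∀ i, Measurable fun ω => y ω i)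
    (hyindep : iIndepFun (fun i ω => y ω i) μ)
    (hylaw : ∀ i, Measure.map (fun ω => y ω i) μ = gaussianReal 0 1) :
    ∀ t : ℝ,
      μ {ω | t ≤ a * ∑ i, (y ω i) ^ 2} ≤ μ {ω | t ≤ x ω ⬝ᵥ ((D * P * D) *ᵥ x ω)} ∧
      μ {ω | t ≤ x ω ⬝ᵥ ((D * P * D) *ᵥ x ω)} ≤ μ {ω | t ≤ b * ∑ i, (y ω i) ^ 2} := by
  classical
  intro t
  have hDT : Dᵀ = D := by rw [hD]; exact Matrix.diagonal_transpose _
  have hS : (D * P * D).IsHermitian := S_isHermitian hsymm hDT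
  set lam : Fin n → ℝ := hS.eigenvalues with hlam
  -- the index injection for nonzero eigenvalues
  have hcard : Fintype.card {i // lam i ≠ 0} = n - m + 1 := by
    rw [← Matrix.IsHermitian.rank_eq_card_non_zero_eigs hS, S_rank ha hav hD, hrank]
  let e : {i // lam i ≠ 0} ≃ Fin (n - m + 1) := Fintype.equivFinOfCardEq hcard
  set g : Fin (n - m + 1) → Fin n := fun j => (e.symm j : Fin n) with hg
  have hginj : Function.Injective g := fun j1 j2 h =>
    e.symm.injective (Subtype.val_injective h)
  have hgne : ∀ j, lam (g j) ≠ 0 := fun j => (e.symm j).2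
  have hrange : ∀ i, lam i ≠ 0 → ∃ j, g j = i := fun i hi =>
    ⟨e ⟨i, hi⟩, by simp [hg]⟩
  have hbound : ∀ i, lam i ≠ 0 → a ≤ lam i ∧ lam i ≤ b :=
    eigen_bound hproj hsymm ha hav hD hS
  -- the unitary
  set U : Matrix (Fin n) (Fin n) ℝ := (hS.eigenvectorUnitary : Matrix (Fin n) (Fin n) ℝ)
    with hU
  have hstarU : star U = Uᵀ := by
    rw [Matrix.star_eq_conjTranspose, Matrix.conjTranspose_eq_transpose_of_trivial]
  have hUtU : Uᵀ * U = 1 := by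
    rw [← hstarU]; exact Unitary.coe_star_mul_self hS.eigenvectorUnitary
  have hUUt : U * Uᵀ = 1 := mul_eq_one_comm.mp hUtU
  have hQ : (Uᵀ)ᵀ * Uᵀ = 1 := by rw [Matrix.transpose_transpose, hUUt]
  -- quadratic form identity
  have hquad : ∀ z : Fin n → ℝ,
      z ⬝ᵥ ((D * P * D) *ᵥ z) = ∑ i, lam i * ((Uᵀ *ᵥ z) i) ^ 2 := by
    intro z
    have hspec : D * P * D = U * Matrix.diagonal lam * Uᵀ := by
      have := hS.spectral_theorem
      rw [Unitary.conjStarAlgAut_apply] at this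
      rwa [RCLike.ofReal_real_eq_id, Function.id_comp, ← hU, hstarU, ← hlam] at this
    rw [hspec, ← Matrix.mulVec_mulVec, ← Matrix.mulVec_mulVec, Matrix.dotProduct_mulVec]
    have hzU : z ᵥ* U = Uᵀ *ᵥ z := by
      rw [← Matrix.transpose_transpose U, Matrix.vecMul_transpose, Matrix.transpose_transpose]
    rw [hzU]
    simp only [dotProduct, Matrix.mulVec_diagonal]
    exact Finset.sum_congr rfl fun i _ => by ring
  -- reduction of the eigen-sum to the nonzero indices
  have hsum_g : ∀ w : Fin n → ℝ,
      ∑ i, lam i * (w i) ^ 2 = ∑ j, lam (g j) * (w (g j)) ^ 2 := by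
    intro w
    calc ∑ i, lam i * (w i) ^ 2
        = ∑ i ∈ Finset.univ.image g, lam i * (w i) ^ 2 := by
          refine (Finset.sum_subset (Finset.subset_univ _) ?_).symm
          intro i _ hi
          have h0 : lam i = 0 := by
            by_contra hne
            obtain ⟨j, rfl⟩ := hrange i hne
            exact hi (Finset.mem_image_of_mem g (Finset.mem_univ j))
          rw [h0, zero_mul]
      _ = ∑ j, lam (g j) * (w (g j)) ^ 2 :=
          Finset.sum_image (fun a _ b _ h => hginj h)
  have hlow : ∀ w : Fin n → ℝ,
      a * ∑ j, (w (g j)) ^ 2 ≤ ∑ i, lam i * (w i) ^ 2 := by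
    intro w
    rw [hsum_g w, Finset.mul_sum]
    exact Finset.sum_le_sum fun j _ =>
      mul_le_mul_of_nonneg_right (hbound _ (hgne j)).1 (sq_nonneg _)
  have hhigh : ∀ w : Fin n → ℝ,
      ∑ i, lam i * (w i) ^ 2 ≤ b * ∑ j, (w (g j)) ^ 2 := by
    intro w
    rw [hsum_g w, Finset.mul_sum]
    exact Finset.sum_le_sum fun j _ =>
      mul_le_mul_of_nonneg_right (hbound _ (hgne j)).2 (sq_nonneg _)
  -- laws
  have hGx : Measure.map x μ = Measure.pi (fun _ : Fin n => gaussianReal 0 1) :=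
    lemA μ x hxmeas hxindep hxlaw
  have hGy : Measure.map y μ
      = Measure.pi (fun _ : Fin (n - m + 1) => gaussianReal 0 1) :=
    lemA μ y hymeas hyindep hylaw
  have hmx : Measurable x := measurable_pi_lambda _ hxmeas
  have hmy : Measurable y := measurable_pi_lambda _ hymeas
  have hcq : Continuous fun z : Fin n → ℝ => z ⬝ᵥ ((D * P * D) *ᵥ z) :=
    continuous_id.dotProduct (continuous_const.matrix_mulVec continuous_id)
  have hcU : Continuous fun z : Fin n → ℝ => Uᵀ *ᵥ z :=
    continuous_const.matrix_mulVec continuous_id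
  have hBq : MeasurableSet {z : Fin n → ℝ | t ≤ z ⬝ᵥ ((D * P * D) *ᵥ z)} :=
    measurableSet_le measurable_const hcq.measurable
  have hBl : MeasurableSet {w : Fin n → ℝ | t ≤ ∑ i, lam i * (w i) ^ 2} :=
    measurableSet_le measurable_const
      (Finset.measurable_sum _ fun i _ =>
        ((measurable_pi_apply i).pow_const 2).const_mul _)
  have hCa : MeasurableSet {v : Fin (n - m + 1) → ℝ | t ≤ a * ∑ j, (v j) ^ 2} :=
    measurableSet_le measurable_const
      ((Finset.measurable_sum _ fun j _ => (measurable_pi_apply j).pow_const 2).const_mul a)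
  have hCb : MeasurableSet {v : Fin (n - m + 1) → ℝ | t ≤ b * ∑ j, (v j) ^ 2} :=
    measurableSet_le measurable_const
      ((Finset.measurable_sum _ fun j _ => (measurable_pi_apply j).pow_const 2).const_mul b)
  have hsel : Measurable fun (z : Fin n → ℝ) (j : Fin (n - m + 1)) => z (g j) :=
    measurable_pi_lambda _ fun j => measurable_pi_apply _
  set G : Measure (Fin n → ℝ) := Measure.pi (fun _ : Fin n => gaussianReal 0 1) with hG
  -- main quantity as a measure under G
  have h1 : μ {ω | t ≤ x ω ⬝ᵥ ((D * P * D) *ᵥ x ω)}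
      = G {w : Fin n → ℝ | t ≤ ∑ i, lam i * (w i) ^ 2} := by
    have hpre : {ω | t ≤ x ω ⬝ᵥ ((D * P * D) *ᵥ x ω)}
        = x ⁻¹' {z : Fin n → ℝ | t ≤ z ⬝ᵥ ((D * P * D) *ᵥ z)} := rfl
    rw [hpre, ← Measure.map_apply hmx hBq, hGx]
    have hset : {z : Fin n → ℝ | t ≤ z ⬝ᵥ ((D * P * D) *ᵥ z)}
        = (fun z => Uᵀ *ᵥ z) ⁻¹' {w : Fin n → ℝ | t ≤ ∑ i, lam i * (w i) ^ 2} := by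
      ext z
      simp only [Set.mem_setOf_eq, Set.mem_preimage]
      rw [hquad z]
    rw [hset, ← Measure.map_apply hcU.measurable hBl, hG, map_mulVec_pi_gaussian Uᵀ hQ]
  -- the chi-square sides
  have h2a : μ {ω | t ≤ a * ∑ i, (y ω i) ^ 2}
      = G {z : Fin n → ℝ | t ≤ a * ∑ j, (z (g j)) ^ 2} := by
    have hpre : {ω | t ≤ a * ∑ i, (y ω i) ^ 2}
        = y ⁻¹' {v : Fin (n - m + 1) → ℝ | t ≤ a * ∑ j, (v j) ^ 2} := rfl
    rw [hpre, ← Measure.map_apply hmy hCa, hGy, ← lemB g hginj (gaussianReal 0 1),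
      Measure.map_apply hsel hCa]
    rfl
  have h2b : μ {ω | t ≤ b * ∑ i, (y ω i) ^ 2}
      = G {z : Fin n → ℝ | t ≤ b * ∑ j, (z (g j)) ^ 2} := by
    have hpre : {ω | t ≤ b * ∑ i, (y ω i) ^ 2}
        = y ⁻¹' {v : Fin (n - m + 1) → ℝ | t ≤ b * ∑ j, (v j) ^ 2} := rfl
    rw [hpre, ← Measure.map_apply hmy hCb, hGy, ← lemB g hginj (gaussianReal 0 1),
      Measure.map_apply hsel hCb]
    rfl
  constructor
  · rw [h1, h2a]
    refine measure_mono fun z hz => ?_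
    exact le_trans hz (hlow z)
  · rw [h1, h2b]
    refine measure_mono fun z hz => ?_
    exact le_trans hz (hhigh z)
end

section
/- (Fan's inequality) Let M₁, M₂ be n×n Hermitian positive semidefinite matrices with M₁ invertible. Denote by λ_k^M the k-th largest eigenvalue of M (so λ_1^M ≥ λ_2^M ≥ ...). Then for indices with i+j+1 ≤ n: λ_{i+j+1}^{M₂} ≤ λ_{i+1}^{M₁M₂} · λ_{j+1}^{M₁^{-1}}, where the eigenvalues of M₁M₂ are those of the (positive semidefinite) matrix M₁^{1/2} M₂ M₁^{1/2}. -/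
open Matrix ComplexOrder

noncomputable section FanAux

namespace FanAux

variable {n : ℕ}

lemma toEuclideanLin_comp (A B : Matrix (Fin n) (Fin n) ℂ) (x : EuclideanSpace ℂ (Fin n)) :
    Matrix.toEuclideanLin A (Matrix.toEuclideanLin B x) = Matrix.toEuclideanLin (A * B) x := by
  simp [Matrix.toEuclideanLin_apply, Matrix.mulVec_mulVec]

lemma toEuclideanLin_one (x : EuclideanSpace ℂ (Fin n)) :
    Matrix.toEuclideanLin (1 : Matrix (Fin n) (Fin n) ℂ) x = x := by
  simp [Matrix.toEuclideanLin_apply, Matrix.one_mulVec]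

lemma apply_eigvecBasis {A : Matrix (Fin n) (Fin n) ℂ} (hA : A.IsHermitian) (k : Fin n) :
    Matrix.toEuclideanLin A (hA.eigenvectorBasis k)
      = (hA.eigenvalues k : ℂ) • hA.eigenvectorBasis k := by
  have := hA.mulVec_eigenvectorBasis k
  apply (WithLp.equiv 2 _).injective
  ext i
  simpa [Matrix.toEuclideanLin_apply] using congrFun this i

lemma inner_toEuclideanLin_conj {S : Matrix (Fin n) (Fin n) ℂ} (hS : S.IsHermitian)
    (M : Matrix (Fin n) (Fin n) ℂ) (x : EuclideanSpace ℂ (Fin n)) :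
    (inner ℂ (Matrix.toEuclideanLin S x) (Matrix.toEuclideanLin M (Matrix.toEuclideanLin S x)) : ℂ)
      = inner ℂ x (Matrix.toEuclideanLin (S * M * S) x) := by
  simp only [EuclideanSpace.inner_eq_star_dotProduct, Matrix.toEuclideanLin_apply]
  simp [Matrix.star_mulVec, hS.eq, Matrix.dotProduct_mulVec, Matrix.mulVec_mulVec,
    Matrix.vecMul_vecMul, Matrix.mul_assoc]
  rw [dotProduct_comm, ← Matrix.dotProduct_mulVec, Matrix.mulVec_mulVec]
  exact dotProduct_comm _ _

lemma repr_eq_zero_of_not_mem {A : Matrix (Fin n) (Fin n) ℂ} (hA : A.IsHermitian)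
    {t : Finset (Fin n)} {x : EuclideanSpace ℂ (Fin n)}
    (hx : x ∈ Submodule.span ℂ (⇑hA.eigenvectorBasis '' ↑t)) {k : Fin n} (hk : k ∉ t) :
    hA.eigenvectorBasis.repr x k = 0 := by
  set b := hA.eigenvectorBasis
  have hsub : (⇑b '' ↑t) ⊆ ↑(Submodule.span ℂ {b k})ᗮ := by
    rintro - ⟨m, hm, rfl⟩
    rw [SetLike.mem_coe, Submodule.mem_orthogonal]
    intro u hu
    obtain ⟨c, rfl⟩ := Submodule.mem_span_singleton.1 hu
    have : (inner ℂ (b k) (b m) : ℂ) = 0 := by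
      apply b.orthonormal.2
      rintro rfl; exact hk hm
    simp [inner_smul_left, this]
  have hx' : x ∈ (Submodule.span ℂ {b k})ᗮ :=
    Submodule.span_le.2 hsub hx
  have := hx' (b k) (Submodule.mem_span_singleton_self _)
  rw [b.repr_apply_apply]
  simpa using this

lemma quad_re_eq {A : Matrix (Fin n) (Fin n) ℂ} (hA : A.IsHermitian)
    (x : EuclideanSpace ℂ (Fin n)) :
    (inner ℂ x (Matrix.toEuclideanLin A x) : ℂ).re
      = ∑ k, hA.eigenvalues k * Complex.normSq (hA.eigenvectorBasis.repr x k) := by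
  set b := hA.eigenvectorBasis
  set c : Fin n → ℂ := fun k => b.repr x k with hc
  have hx : x = ∑ k, c k • b k := (b.sum_repr x).symm
  have hTx : Matrix.toEuclideanLin A x
      = ∑ k, ((hA.eigenvalues k : ℂ) * c k) • b k := by
    conv_lhs => rw [hx]
    rw [map_sum]
    congr 1; ext k
    rw [LinearMap.map_smul, apply_eigvecBasis hA k, smul_smul, mul_comm]
  have key : (inner ℂ x (Matrix.toEuclideanLin A x) : ℂ)
      = ∑ k, (starRingEnd ℂ) (c k) * ((hA.eigenvalues k : ℂ) * c k) := by
    rw [hTx]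
    conv_lhs => rw [hx]
    exact b.orthonormal.inner_sum c (fun k => (hA.eigenvalues k : ℂ) * c k) Finset.univ
  rw [key, Complex.re_sum]
  congr 1; ext k
  have : (starRingEnd ℂ) (c k) * ((hA.eigenvalues k : ℂ) * c k)
      = (hA.eigenvalues k : ℂ) * ((Complex.normSq (c k) : ℝ) : ℂ) := by
    rw [Complex.normSq_eq_conj_mul_self]
    ring
  rw [this, ← Complex.ofReal_mul, Complex.ofReal_re]

lemma norm_sq_eq_sum {A : Matrix (Fin n) (Fin n) ℂ} (hA : A.IsHermitian)
    (x : EuclideanSpace ℂ (Fin n)) :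
    ‖x‖ ^ 2 = ∑ k, Complex.normSq (hA.eigenvectorBasis.repr x k) := by
  set b := hA.eigenvectorBasis
  have h : ‖x‖ = ‖b.repr x‖ := (b.repr.norm_map x).symm
  rw [h, EuclideanSpace.norm_eq, Real.sq_sqrt (by positivity)]
  congr 1; ext k
  rw [← Complex.sq_norm]

lemma quad_le_of_mem_span {A : Matrix (Fin n) (Fin n) ℂ} (hA : A.IsHermitian)
    {t : Finset (Fin n)} {c : ℝ} (hc : ∀ k ∈ t, hA.eigenvalues k ≤ c)
    {x : EuclideanSpace ℂ (Fin n)}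
    (hx : x ∈ Submodule.span ℂ (⇑hA.eigenvectorBasis '' ↑t)) :
    (inner ℂ x (Matrix.toEuclideanLin A x) : ℂ).re ≤ c * ‖x‖ ^ 2 := by
  rw [quad_re_eq hA x, norm_sq_eq_sum hA x, Finset.mul_sum]
  refine Finset.sum_le_sum fun k _ => ?_
  by_cases hk : k ∈ t
  · exact mul_le_mul_of_nonneg_right (hc k hk) (Complex.normSq_nonneg _)
  · rw [repr_eq_zero_of_not_mem hA hx hk]
    simp

lemma le_quad_of_mem_span {A : Matrix (Fin n) (Fin n) ℂ} (hA : A.IsHermitian)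
    {t : Finset (Fin n)} {c : ℝ} (hc : ∀ k ∈ t, c ≤ hA.eigenvalues k)
    {x : EuclideanSpace ℂ (Fin n)}
    (hx : x ∈ Submodule.span ℂ (⇑hA.eigenvectorBasis '' ↑t)) :
    c * ‖x‖ ^ 2 ≤ (inner ℂ x (Matrix.toEuclideanLin A x) : ℂ).re := by
  rw [quad_re_eq hA x, norm_sq_eq_sum hA x, Finset.mul_sum]
  refine Finset.sum_le_sum fun k _ => ?_
  by_cases hk : k ∈ t
  · exact mul_le_mul_of_nonneg_right (hc k hk) (Complex.normSq_nonneg _)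
  · rw [repr_eq_zero_of_not_mem hA hx hk]
    simp

lemma finrank_span_image (b : OrthonormalBasis (Fin n) ℂ (EuclideanSpace ℂ (Fin n)))
    (t : Finset (Fin n)) :
    Module.finrank ℂ (Submodule.span ℂ (⇑b '' ↑t)) = t.card := by
  have hli : LinearIndependent ℂ (fun k : {x // x ∈ t} => b ↑k) :=
    b.orthonormal.linearIndependent.comp _ Subtype.val_injective
  have hr : Set.range (fun k : {x // x ∈ t} => b ↑k) = ⇑b '' ↑t := by
    rw [Set.image_eq_range]
    rfl
  rw [← hr, finrank_span_eq_card hli, Fintype.card_coe]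

lemma inf_finrank_ge (p q : Submodule ℂ (EuclideanSpace ℂ (Fin n))) :
    Module.finrank ℂ p + Module.finrank ℂ q
      ≤ n + Module.finrank ℂ (p ⊓ q : Submodule ℂ (EuclideanSpace ℂ (Fin n))) := by
  have h1 := Submodule.finrank_sup_add_finrank_inf_eq p q
  have h2 : Module.finrank ℂ (p ⊔ q : Submodule ℂ (EuclideanSpace ℂ (Fin n)))
      ≤ n := by
    simpa [finrank_euclideanSpace_fin] using
      Submodule.finrank_le (p ⊔ q : Submodule ℂ (EuclideanSpace ℂ (Fin n)))
  omega

end FanAux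

end FanAux

open FanAux in
/-- Fan's inequality: for `M₁` Hermitian positive definite and `M₂` Hermitian
positive semidefinite, the decreasingly ordered eigenvalues satisfy
`λ_{i+j+1}(M₂) ≤ λ_{i+1}(M₁M₂) · λ_{j+1}(M₁⁻¹)`, where the eigenvalues of
`M₁M₂` are those of `√M₁ M₂ √M₁`. -/
theorem fan_inequality (n : ℕ) (M₁ M₂ : Matrix (Fin n) (Fin n) ℂ)
    (h₁ : M₁.PosDef) (h₂ : M₂.PosSemidef)
    (h₁₂ : (((h₁.posSemidef.1.eigenvectorUnitary : Matrix (Fin n) (Fin n) ℂ) * diagonal (((↑) : ℝ → ℂ) ∘ Real.sqrt ∘ h₁.posSemidef.1.eigenvalues) * (star h₁.posSemidef.1.eigenvectorUnitary : Matrix (Fin n) (Fin n) ℂ)) * M₂ * ((h₁.posSemidef.1.eigenvectorUnitary : Matrix (Fin n) (Fin n) ℂ) * diagonal (((↑) : ℝ → ℂ) ∘ Real.sqrt ∘ h₁.posSemidef.1.eigenvalues) * (star h₁.posSemidef.1.eigenvectorUnitary : Matrix (Fin n) (Fin n) ℂ))).IsHermitian)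
    (hinv : (M₁⁻¹).IsHermitian)
    (lam₂ ν ρ : Fin n → ℝ)
    (hlam₂anti : Antitone lam₂) (hνanti : Antitone ν) (hρanti : Antitone ρ)
    (hlam₂ : ∃ σ : Equiv.Perm (Fin n), lam₂ = h₂.1.eigenvalues ∘ σ)
    (hν : ∃ σ : Equiv.Perm (Fin n), ν = h₁₂.eigenvalues ∘ σ)
    (hρ : ∃ σ : Equiv.Perm (Fin n), ρ = hinv.eigenvalues ∘ σ) :
    ∀ (i j : ℕ) (h : i + j < n),
      lam₂ ⟨i + j, h⟩
        ≤ ν ⟨i, lt_of_le_of_lt (Nat.le_add_right i j) h⟩ *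
          ρ ⟨j, lt_of_le_of_lt (Nat.le_add_left j i) h⟩ := by
  intro i j h
  obtain ⟨σ₂, hσ₂⟩ := hlam₂
  obtain ⟨σν, hσν⟩ := hν
  obtain ⟨σρ, hσρ⟩ := hρ
  let E := h₁.posSemidef.1.eigenvectorUnitary
  let D : Matrix (Fin n) (Fin n) ℂ :=
    diagonal (((↑) : ℝ → ℂ) ∘ Real.sqrt ∘ h₁.posSemidef.1.eigenvalues)
  let S := (E : Matrix (Fin n) (Fin n) ℂ) * D * (star E : Matrix (Fin n) (Fin n) ℂ)
  have hSps : S.PosSemidef := by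
    have hD : D.PosSemidef := by
      show (diagonal _).PosSemidef
      rw [posSemidef_diagonal_iff]
      intro k
      exact Complex.zero_le_real.2 (Real.sqrt_nonneg _)
    have := hD.mul_mul_conjTranspose_same (E : Matrix (Fin n) (Fin n) ℂ)
    rwa [← Matrix.star_eq_conjTranspose] at this
  have hS : S.IsHermitian := hSps.1
  have hSS : S * S = M₁ := by
    have hUU : (star E : Matrix (Fin n) (Fin n) ℂ) * (E : Matrix (Fin n) (Fin n) ℂ) = 1 :=
      Unitary.coe_star_mul_self E
    have hDD : D * D = diagonal (RCLike.ofReal ∘ h₁.posSemidef.1.eigenvalues) := by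
      show diagonal _ * diagonal _ = _
      rw [diagonal_mul_diagonal]
      congr 1; ext k
      simp only [Function.comp_apply]
      rw [← Complex.ofReal_mul, Real.mul_self_sqrt (h₁.posSemidef.eigenvalues_nonneg k)]
      rfl
    have h3 : S * S = (E : Matrix (Fin n) (Fin n) ℂ) * D *
        ((star E : Matrix (Fin n) (Fin n) ℂ) * (E : Matrix (Fin n) (Fin n) ℂ)) * D *
        (star E : Matrix (Fin n) (Fin n) ℂ) := by
      simp only [S, Matrix.mul_assoc]
    rw [h3, hUU, Matrix.mul_one, Matrix.mul_assoc (E : Matrix (Fin n) (Fin n) ℂ) D D, hDD]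
    conv_rhs => rw [h₁.posSemidef.1.spectral_theorem]
    rw [Unitary.conjStarAlgAut_apply]
  -- S is invertible
  have hdetM₁ : M₁.det ≠ 0 := h₁.det_pos.ne'
  have hdS : IsUnit S.det := by
    rw [isUnit_iff_ne_zero]
    intro h0
    apply hdetM₁
    rw [← hSS, Matrix.det_mul, h0, mul_zero]
  have hsinv : S * S⁻¹ = 1 := S.mul_nonsing_inv hdS
  have hinvs : S⁻¹ * S = 1 := S.nonsing_inv_mul hdS
  have hSMS : S * M₁⁻¹ * S = 1 := by
    have hM : M₁⁻¹ = S⁻¹ * S⁻¹ := by rw [← hSS, Matrix.mul_inv_rev]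
    rw [hM]
    calc S * (S⁻¹ * S⁻¹) * S = (S * S⁻¹) * (S⁻¹ * S) := by
          simp only [Matrix.mul_assoc]
      _ = 1 := by rw [hsinv, hinvs, one_mul]
  have hB : (S * M₂ * S).PosSemidef := by
    have := h₂.mul_mul_conjTranspose_same S
    rwa [hS.eq] at this
  -- the linear map given by S
  set f : EuclideanSpace ℂ (Fin n) →ₗ[ℂ] EuclideanSpace ℂ (Fin n) :=
    Matrix.toEuclideanLin S with hf
  have hfinj : Function.Injective f := by
    intro a b hab
    have := congrArg (Matrix.toEuclideanLin S⁻¹) hab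
    rwa [toEuclideanLin_comp, toEuclideanLin_comp, hinvs, toEuclideanLin_one,
      toEuclideanLin_one] at this
  -- index sets
  set fi : Fin n := ⟨i, lt_of_le_of_lt (Nat.le_add_right i j) h⟩
  set fj : Fin n := ⟨j, lt_of_le_of_lt (Nat.le_add_left j i) h⟩
  set fij : Fin n := ⟨i + j, h⟩
  set t₂ : Finset (Fin n) := (Finset.Iic fij).image σ₂ with ht₂
  set tν : Finset (Fin n) := (Finset.Ici fi).image σν with htν
  set tρ : Finset (Fin n) := (Finset.Ici fj).image σρ with htρ
  have hct₂ : t₂.card = i + j + 1 := by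
    rw [ht₂, Finset.card_image_of_injective _ σ₂.injective, Fin.card_Iic]
  have hctν : tν.card = n - i := by
    rw [htν, Finset.card_image_of_injective _ σν.injective, Fin.card_Ici]
  have hctρ : tρ.card = n - j := by
    rw [htρ, Finset.card_image_of_injective _ σρ.injective, Fin.card_Ici]
  -- subspaces
  set U : Submodule ℂ (EuclideanSpace ℂ (Fin n)) :=
    Submodule.span ℂ (⇑h₂.1.eigenvectorBasis '' ↑t₂) with hU
  set V₀ : Submodule ℂ (EuclideanSpace ℂ (Fin n)) :=
    Submodule.span ℂ (⇑h₁₂.eigenvectorBasis '' ↑tν) with hV₀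
  set V : Submodule ℂ (EuclideanSpace ℂ (Fin n)) := V₀.map f with hV
  set W : Submodule ℂ (EuclideanSpace ℂ (Fin n)) :=
    Submodule.span ℂ (⇑hinv.eigenvectorBasis '' ↑tρ) with hW
  have hdU : Module.finrank ℂ U = i + j + 1 := by
    rw [hU, finrank_span_image, hct₂]
  have hdV : Module.finrank ℂ V = n - i := by
    rw [hV, ← (Submodule.equivMapOfInjective f hfinj V₀).finrank_eq, hV₀,
      finrank_span_image, hctν]
  have hdW : Module.finrank ℂ W = n - j := by
    rw [hW, finrank_span_image, hctρ]
  -- dimension count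
  have hVW := inf_finrank_ge V W
  have hUVW := inf_finrank_ge U (V ⊓ W)
  have hpos : 0 < Module.finrank ℂ (U ⊓ (V ⊓ W) : Submodule ℂ (EuclideanSpace ℂ (Fin n))) := by
    omega
  have hne : (U ⊓ (V ⊓ W) : Submodule ℂ (EuclideanSpace ℂ (Fin n))) ≠ ⊥ := by
    intro hbot
    rw [hbot, finrank_bot] at hpos
    exact lt_irrefl 0 hpos
  obtain ⟨y, hy, hy0⟩ := Submodule.exists_mem_ne_zero_of_ne_bot hne
  obtain ⟨hyU, hyV, hyW⟩ : y ∈ U ∧ y ∈ V ∧ y ∈ W := by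
    simpa using hy
  obtain ⟨x, hxV₀, hxy⟩ := Submodule.mem_map.1 hyV
  -- bounds
  have hbound1 : lam₂ fij * ‖y‖ ^ 2
      ≤ (inner ℂ y (Matrix.toEuclideanLin M₂ y) : ℂ).re := by
    refine le_quad_of_mem_span h₂.1 ?_ hyU
    intro k hk
    obtain ⟨m, hm, rfl⟩ := Finset.mem_image.1 hk
    have : h₂.1.eigenvalues (σ₂ m) = lam₂ m := by rw [hσ₂]; rfl
    rw [this]
    exact hlam₂anti (Finset.mem_Iic.1 hm)
  have hbound2 : (inner ℂ x (Matrix.toEuclideanLin (S * M₂ * S) x) : ℂ).re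
      ≤ ν fi * ‖x‖ ^ 2 := by
    refine quad_le_of_mem_span h₁₂ ?_ hxV₀
    intro k hk
    obtain ⟨m, hm, rfl⟩ := Finset.mem_image.1 hk
    have : h₁₂.eigenvalues (σν m) = ν m := by rw [hσν]; rfl
    rw [this]
    exact hνanti (Finset.mem_Ici.1 hm)
  have hbound3 : (inner ℂ y (Matrix.toEuclideanLin M₁⁻¹ y) : ℂ).re
      ≤ ρ fj * ‖y‖ ^ 2 := by
    refine quad_le_of_mem_span hinv ?_ hyW
    intro k hk
    obtain ⟨m, hm, rfl⟩ := Finset.mem_image.1 hk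
    have : hinv.eigenvalues (σρ m) = ρ m := by rw [hσρ]; rfl
    rw [this]
    exact hρanti (Finset.mem_Ici.1 hm)
  -- transfers via S
  have htrans2 : (inner ℂ y (Matrix.toEuclideanLin M₂ y) : ℂ)
      = inner ℂ x (Matrix.toEuclideanLin (S * M₂ * S) x) := by
    rw [← hxy]
    exact inner_toEuclideanLin_conj hS M₂ x
  have htrans3 : (‖x‖ : ℝ) ^ 2 = (inner ℂ y (Matrix.toEuclideanLin M₁⁻¹ y) : ℂ).re := by
    rw [← hxy]
    have := inner_toEuclideanLin_conj hS M₁⁻¹ x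
    rw [this, hSMS]
    have h1 : Matrix.toEuclideanLin (1 : Matrix (Fin n) (Fin n) ℂ) x = x :=
      toEuclideanLin_one x
    rw [h1, inner_self_eq_norm_sq_to_K]
    norm_cast
  have hν0 : 0 ≤ ν fi := by
    rw [hσν]
    exact hB.eigenvalues_nonneg (σν fi)
  -- put it together
  have hchain : lam₂ fij * ‖y‖ ^ 2 ≤ (ν fi * ρ fj) * ‖y‖ ^ 2 := by
    calc lam₂ fij * ‖y‖ ^ 2
        ≤ (inner ℂ y (Matrix.toEuclideanLin M₂ y) : ℂ).re := hbound1
      _ = (inner ℂ x (Matrix.toEuclideanLin (S * M₂ * S) x) : ℂ).re := by rw [htrans2]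
      _ ≤ ν fi * ‖x‖ ^ 2 := hbound2
      _ = ν fi * (inner ℂ y (Matrix.toEuclideanLin M₁⁻¹ y) : ℂ).re := by rw [htrans3]
      _ ≤ ν fi * (ρ fj * ‖y‖ ^ 2) := mul_le_mul_of_nonneg_left hbound3 hν0
      _ = (ν fi * ρ fj) * ‖y‖ ^ 2 := by ring
  have hN : (0 : ℝ) < ‖y‖ ^ 2 := by
    have : ‖y‖ ≠ 0 := norm_ne_zero_iff.2 hy0
    positivity
  exact le_of_mul_le_mul_right hchain hN
end
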